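/- arXiv:1609.04884 — 2 statements merged into one kernel-verified Lean document; each statement's English description precedes it below -/
import Mathlib

section
/- Let T ∈ B(H) be a CoR operator decomposed as T = [[A,B],[0,0]] with respect to H = closure(R(T)) ⊕ N(T*). Then N(B*) = closure(R(T)) ∩ closure(R(T*)); equivalently, closure(R(B)) = closure(R(T)) ⊖ (closure(R(T)) ∩ closure(R(T*))). -/
/-! Write `K = closure R(T)`, `C = closure R(T*)`, `M = K ∩ C`. Since `B* = P_{N(T*)} T*` on `K`
and `N(T*) = K⊥`, a vector `x ∈ K` lies in `N(B*)` iff `T* x ∈ K`. The CoR condition makes `T*` map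
`M` into itself and agree with `T` there. So if `x ∈ K` and `T* x ∈ K`, split `x = m + u` with
`m ∈ M`, `u ⊥ M`: then `T* u ∈ M` and `‖T* u‖² = ⟪T T* u, u⟫ = ⟪T* T* u, u⟫ = 0`, whence
`u ∈ K ∩ K⊥ = 0` and `x ∈ C`. The statement on `closure R(B)` is the orthogonal complement of
the one on `N(B*)`. -/

open ContinuousLinearMap

variable {H : Type*} [NormedAddCommGroup H] [InnerProductSpace ℂ H] [CompleteSpace H]

noncomputable def opB (T : H →L[ℂ] H) (K N : Submodule ℂ H) [CompleteSpace K] :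
    N →L[ℂ] K :=
  (K.orthogonalProjectionOnto) ∘L (T ∘L N.subtypeL)

lemma ContinuousLinearMap.apply_mem_closure_range {R M M₂ : Type*} [Semiring R]
    [AddCommMonoid M] [Module R M] [TopologicalSpace M]
    [AddCommMonoid M₂] [Module R M₂] [TopologicalSpace M₂] [ContinuousAdd M₂]
    [ContinuousConstSMul R M₂] (T : M →L[R] M₂) (x : M) : T x ∈ T.range.topologicalClosure :=
  Submodule.le_topologicalClosure _ (LinearMap.mem_range_self _ x)

section CoR

variable {𝕜 E : Type*} [RCLike 𝕜] [NormedAddCommGroup E] [InnerProductSpace 𝕜 E] [CompleteSpace E]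

def IsCoR (T : E →L[𝕜] E) : Prop :=
  ∀ x ∈ T.range.topologicalClosure ⊓ (adjoint T).range.topologicalClosure, T x = adjoint T x

lemma ker_adjoint_eq_orthogonal_closure_range (T : E →L[𝕜] E) :
    (adjoint T).ker = T.range.topologicalClosureᗮ := by
  rw [Submodule.orthogonal_closure, orthogonal_range]

namespace IsCoR

variable {T : E →L[𝕜] E}

lemma adjoint_apply_mem_inf (hT : IsCoR T) {x : E}
    (hx : x ∈ T.range.topologicalClosure ⊓ (adjoint T).range.topologicalClosure) :
    adjoint T x ∈ T.range.topologicalClosure ⊓ (adjoint T).range.topologicalClosure :=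
  ⟨hT x hx ▸ apply_mem_closure_range T x, apply_mem_closure_range (adjoint T) x⟩

lemma adjoint_apply_eq_zero_of_mem_orthogonal (hT : IsCoR T) {u : E}
    (hu : u ∈ (T.range.topologicalClosure ⊓ (adjoint T).range.topologicalClosure)ᗮ)
    (hTu : adjoint T u ∈ T.range.topologicalClosure ⊓ (adjoint T).range.topologicalClosure) :
    adjoint T u = 0 := by
  rw [← inner_self_eq_zero (𝕜 := 𝕜), adjoint_inner_right, hT _ hTu]
  exact Submodule.inner_right_of_mem_orthogonal (hT.adjoint_apply_mem_inf hTu) hu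

lemma mem_closure_range_adjoint_of_adjoint_apply_mem (hT : IsCoR T) {x : E}
    (hx : x ∈ T.range.topologicalClosure) (hTx : adjoint T x ∈ T.range.topologicalClosure) :
    x ∈ (adjoint T).range.topologicalClosure := by
  set K := T.range.topologicalClosure
  set M := K ⊓ (adjoint T).range.topologicalClosure
  have hM : IsClosed (M : Set E) :=
    T.range.isClosed_topologicalClosure.inter (adjoint T).range.isClosed_topologicalClosure
  have := hM.completeSpace_coe
  obtain ⟨m, hm, u, hu, rfl⟩ := M.exists_add_mem_mem_orthogonal x
  have huK : u ∈ K := by simpa using K.sub_mem hx hm.1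
  have hTuM : adjoint T u ∈ M :=
    ⟨by simpa using K.sub_mem hTx (hT.adjoint_apply_mem_inf hm).1,
      apply_mem_closure_range (adjoint T) u⟩
  have huKo : u ∈ Kᗮ := by
    rw [← ker_adjoint_eq_orthogonal_closure_range]
    exact hT.adjoint_apply_eq_zero_of_mem_orthogonal hu hTuM
  have hu0 : u = 0 := by
    simpa [K.inf_orthogonal_eq_bot] using Submodule.mem_inf.2 ⟨huK, huKo⟩
  rw [hu0, add_zero]
  exact hm.2

lemma adjoint_apply_mem_closure_range_iff (hT : IsCoR T) {x : E}
    (hx : x ∈ T.range.topologicalClosure) :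
    adjoint T x ∈ T.range.topologicalClosure ↔ x ∈ (adjoint T).range.topologicalClosure :=
  ⟨hT.mem_closure_range_adjoint_of_adjoint_apply_mem hx,
    fun hx' ↦ hT x ⟨hx, hx'⟩ ▸ apply_mem_closure_range T x⟩

end IsCoR

end CoR

lemma adjoint_opB (T : H →L[ℂ] H) (K N : Submodule ℂ H) [CompleteSpace K] [CompleteSpace N] :
    adjoint (opB T K N) = N.orthogonalProjectionOnto ∘L adjoint T ∘L K.subtypeL := by
  simp [opB, adjoint_comp, Submodule.adjoint_orthogonalProjectionOnto, Submodule.adjoint_subtypeL,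
    comp_assoc]

lemma adjoint_opB_ker_adjoint_apply_eq_zero_iff (T : H →L[ℂ] H) (K : Submodule ℂ H)
    [CompleteSpace K] [CompleteSpace (adjoint T).ker] (x : K) :
    adjoint (opB T K (adjoint T).ker) x = 0 ↔ adjoint T x ∈ T.range.topologicalClosure := by
  rw [adjoint_opB, comp_apply, comp_apply, Submodule.orthogonalProjectionOnto_eq_zero_iff,
    orthogonal_ker, adjoint_adjoint, Submodule.subtypeL_apply]

lemma IsCoR.ker_adjoint_opB {T : H →L[ℂ] H} (hT : IsCoR T)
    [CompleteSpace T.range.topologicalClosure] [CompleteSpace (adjoint T).ker] :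
    (adjoint (opB T T.range.topologicalClosure (adjoint T).ker)).ker =
      (T.range.topologicalClosure ⊓ (adjoint T).range.topologicalClosure).comap
        (T.range.topologicalClosure.subtypeL : T.range.topologicalClosure →ₗ[ℂ] H) := by
  ext x
  rw [LinearMap.mem_ker, coe_coe, adjoint_opB_ker_adjoint_apply_eq_zero_iff,
    hT.adjoint_apply_mem_closure_range_iff x.2]
  exact ⟨fun h ↦ ⟨x.2, h⟩, And.right⟩

theorem stmt9 (T : H →L[ℂ] H)
    (hCoR : ∀ x ∈ (LinearMap.range (T : H →ₗ[ℂ] H)).topologicalClosure ⊓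
        (LinearMap.range (adjoint T : H →ₗ[ℂ] H)).topologicalClosure, T x = adjoint T x) :
    haveI : CompleteSpace (LinearMap.range (T : H →ₗ[ℂ] H)).topologicalClosure :=
      (LinearMap.range (T : H →ₗ[ℂ] H)).isClosed_topologicalClosure.completeSpace_coe
    haveI : CompleteSpace (LinearMap.ker (adjoint T : H →ₗ[ℂ] H)) :=
      (ContinuousLinearMap.isClosed_ker (adjoint T)).completeSpace_coe
    (let K := (LinearMap.range (T : H →ₗ[ℂ] H)).topologicalClosure
     let M := K ⊓ (LinearMap.range (adjoint T : H →ₗ[ℂ] H)).topologicalClosure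
     let B := opB T K (LinearMap.ker (adjoint T : H →ₗ[ℂ] H))
     LinearMap.ker (adjoint B : K →ₗ[ℂ] LinearMap.ker (adjoint T : H →ₗ[ℂ] H)) = M.comap (K.subtypeL : K →ₗ[ℂ] H) ∧
       (LinearMap.range (B : LinearMap.ker (adjoint T : H →ₗ[ℂ] H) →ₗ[ℂ] K)).topologicalClosure = (M.comap (K.subtypeL : K →ₗ[ℂ] H))ᗮ) := by
  have : CompleteSpace T.range.topologicalClosure :=
    T.range.isClosed_topologicalClosure.completeSpace_coe
  have : CompleteSpace (adjoint T).ker := (isClosed_ker (adjoint T)).completeSpace_coe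
  have hker := IsCoR.ker_adjoint_opB hCoR
  refine ⟨hker, ?_⟩
  rw [← hker, orthogonal_ker, adjoint_adjoint]
end

section
/- Let P and Q be orthogonal projections on a complex Hilbert space H such that the alternating product S = PQ⋯PQ (of some even length 2n, starting with P and ending with Q) has closed range. Then R(S + S*) is closed if and only if R(S) + R(S*) is closed, and in that case R(S) + R(S*) = R(S + S*), where S* = QP⋯QP. -/
/-!
Write `A = R(S)` and `B = R(S*)`; both are closed since `R(S)` is. For `n ≥ 1` and `a ∈ A` we have
`P a = a`, hence `‖S* a‖² = Re ⟪(PQP)^(2n-1) a, a⟫ ≤ Re ⟪(PQP)^n a, a⟫ = Re ⟪S a, a⟫`, because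
`k ↦ Re ⟪(C* C)^k a, a⟫` is antitone for the contraction `C = QP`, and `PQP = C* C`. Symmetrically
`‖S b‖² ≤ Re ⟪S* b, b⟫` for `b ∈ B`. The rest of the argument uses only these two inequalities.

They force `ker (S + S*) = ker S ⊓ ker S* = (A + B)ᗮ`, so `R(S + S*) ⊆ A + B ⊆ closure R(S + S*)`,
which settles the case where `R(S + S*)` is closed. If instead `A + B` is closed, the pairs
`(P_A x, P_B x)` are exactly the `(α, β) ∈ A × B` with `α - β ⊥ A ⊓ B`, and
`(S + S*) x = S β + S* α`. Hitting `a + b` this way amounts to inverting, on `A ⊓ B`, the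
compression of `S*⁻¹ + S⁻¹` (inverses of `S* : A → B` and `S : B → A`), which the two inequalities
make coercive.
-/

open ContinuousLinearMap RCLike
open scoped InnerProductSpace InnerProduct

section

variable {𝕜 E F : Type*} [RCLike 𝕜] [NormedAddCommGroup E] [InnerProductSpace 𝕜 E]
  [NormedAddCommGroup F] [InnerProductSpace 𝕜 F]

namespace ContinuousLinearMap

theorem apply_starProjection_of_orthogonal_le_ker (T : E →L[𝕜] F) (K : Submodule 𝕜 E)
    [K.HasOrthogonalProjection] (hK : Kᗮ ≤ T.ker) (x : E) : T (K.starProjection x) = T x := by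
  have hx := hK (Submodule.sub_starProjection_mem_orthogonal (K := K) x)
  rwa [LinearMap.mem_ker, coe_coe, map_sub, sub_eq_zero, eq_comm] at hx

theorem norm_le_of_coercive {T : E →L[𝕜] E} {c : ℝ} (h : ∀ x, c * ‖x‖ ^ 2 ≤ re ⟪T x, x⟫_𝕜)
    (x : E) : c * ‖x‖ ≤ ‖T x‖ := by
  rcases eq_or_ne x 0 with rfl | hx
  · simp
  have := (h x).trans (re_inner_le_norm _ _)
  nlinarith [norm_pos_iff.mpr hx]

variable [CompleteSpace E]

theorem surjective_of_coercive (T : E →L[𝕜] E) {c : ℝ} (hc : 0 < c)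
    (h : ∀ x, c * ‖x‖ ^ 2 ≤ re ⟪T x, x⟫_𝕜) : Function.Surjective T := by
  have hadj : ∀ x, c * ‖x‖ ^ 2 ≤ re ⟪(T†) x, x⟫_𝕜 := fun x ↦ by
    rw [adjoint_inner_left, inner_re_symm]; exact h x
  have hclosed : IsClosed (T.range : Set E) := by
    refine (T.antilipschitz_of_bound (K := c.toNNReal⁻¹) fun x ↦ ?_).isClosed_range
      T.uniformContinuous
    rw [NNReal.coe_inv, Real.coe_toNNReal _ hc.le, inv_mul_eq_div, le_div_iff₀' hc]
    exact norm_le_of_coercive h x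
  have hker : T†.ker = ⊥ := by
    refine Submodule.eq_bot_iff _ |>.mpr fun x hx ↦ norm_le_zero_iff.mp ?_
    have := norm_le_of_coercive hadj x
    rw [show (T†) x = 0 from hx, norm_zero] at this
    nlinarith [norm_nonneg x]
  rw [← coe_coe, ← LinearMap.range_eq_top, ← hclosed.submodule_topologicalClosure_eq,
    ← adjoint_adjoint T, ← orthogonal_ker, hker, Submodule.bot_orthogonal_eq_top]

variable [CompleteSpace F]

theorem exists_comp_eq_starProjection_orthogonal_ker (T : E →L[𝕜] F)
    (hT : IsClosed (T.range : Set F)) : ∃ G : F →L[𝕜] E, G ∘L T = T.kerᗮ.starProjection := by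
  set K := T.kerᗮ
  set f := T ∘L K.subtypeL
  have hinj : Function.Injective f := by
    rw [← coe_coe, ← LinearMap.ker_eq_bot, Submodule.eq_bot_iff]
    intro k hk
    have hk' : (k : E) ∈ K ⊓ Kᗮ := ⟨k.2, by rwa [T.ker.orthogonal_orthogonal]⟩
    simpa [Submodule.inf_orthogonal_eq_bot] using hk'
  have hf (x : E) : f (K.orthogonalProjectionOnto x) = T x :=
    T.apply_starProjection_of_orthogonal_le_ker K (T.ker.orthogonal_orthogonal).le x
  have hclosed : IsClosed (Set.range f) := by
    convert hT using 1
    ext y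
    exact ⟨fun ⟨k, hk⟩ ↦ ⟨k, hk⟩, fun ⟨x, hx⟩ ↦ ⟨K.orthogonalProjectionOnto x, (hf x).trans hx⟩⟩
  have : CompleteSpace f.range := (show IsClosed (f.range : Set F) from hclosed).completeSpace_coe
  obtain ⟨g, hg⟩ := HasLeftInverse.of_injective_of_isClosed_range_of_closedComplement_range hinj
    hclosed f.range.isTopCompl_orthogonal.closedComplemented
  refine ⟨K.subtypeL ∘L g, ContinuousLinearMap.ext fun x ↦ ?_⟩
  simp only [comp_apply, ← hf x, hg _]
  rfl

theorem range_adjoint_eq_orthogonal_ker (T : E →L[𝕜] F) (hT : IsClosed (T.range : Set F)) :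
    T†.range = T.kerᗮ := by
  obtain ⟨G, hG⟩ := T.exists_comp_eq_starProjection_orthogonal_ker hT
  have hGT : T† ∘L G† = T.kerᗮ.starProjection := by
    rw [← adjoint_comp, hG, (isSelfAdjoint_starProjection _).adjoint_eq]
  refine le_antisymm (T.orthogonal_ker ▸ Submodule.le_topologicalClosure _) fun x hx ↦ ⟨(G†) x, ?_⟩
  simpa using congr($hGT x).trans (Submodule.starProjection_eq_self_iff.mpr hx)

theorem isClosed_range_adjoint (T : E →L[𝕜] F) (hT : IsClosed (T.range : Set F)) :
    IsClosed (T†.range : Set E) :=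
  T.range_adjoint_eq_orthogonal_ker hT ▸ Submodule.isClosed_orthogonal _

theorem range_eq_orthogonal_ker_adjoint (T : E →L[𝕜] F) (hT : IsClosed (T.range : Set F)) :
    T.range = T†.kerᗮ := by
  simpa using T†.range_adjoint_eq_orthogonal_ker (T.isClosed_range_adjoint hT)

theorem exists_rightInverse_on_range (T : E →L[𝕜] F) (hT : IsClosed (T.range : Set F)) :
    ∃ G : F →L[𝕜] E, ∀ y ∈ T.range, T (G y) = y ∧ G y ∈ T†.range := by
  obtain ⟨G, hG⟩ := T.exists_comp_eq_starProjection_orthogonal_ker hT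
  refine ⟨G, ?_⟩
  rintro _ ⟨x, rfl⟩
  rw [coe_coe, ← comp_apply G, hG, T.range_adjoint_eq_orthogonal_ker hT]
  exact ⟨T.apply_starProjection_of_orthogonal_le_ker _ (T.ker.orthogonal_orthogonal).le x,
    Submodule.starProjection_apply_mem _ _⟩

theorem apply_starProjection_range_adjoint (T : E →L[𝕜] F) [(T†).range.HasOrthogonalProjection]
    (x : E) : T ((T†).range.starProjection x) = T x :=
  T.apply_starProjection_of_orthogonal_le_ker _ (by rw [orthogonal_range, adjoint_adjoint]) x

theorem adjoint_apply_starProjection_range (T : E →L[𝕜] F) [T.range.HasOrthogonalProjection]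
    (y : F) : (T†) (T.range.starProjection y) = (T†) y :=
  T†.apply_starProjection_of_orthogonal_le_ker _ T.orthogonal_range.le y

end ContinuousLinearMap

namespace Submodule

theorem exists_sub_mem_orthogonal_of_coercive (K : Submodule 𝕜 E) [CompleteSpace K]
    (L : E →L[𝕜] E) {c : ℝ} (hc : 0 < c) (h : ∀ v ∈ K, c * ‖v‖ ^ 2 ≤ re ⟪L v, v⟫_𝕜) (w : E) :
    ∃ v ∈ K, L v - w ∈ Kᗮ := by
  set R : K →L[𝕜] K := K.orthogonalProjectionOnto ∘L L ∘L K.subtypeL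
  have hR (v : K) : c * ‖v‖ ^ 2 ≤ re ⟪R v, v⟫_𝕜 := by simpa [R] using h v v.2
  obtain ⟨v, hv⟩ := surjective_of_coercive R hc hR (K.orthogonalProjectionOnto w)
  refine ⟨v, v.2, ?_⟩
  rw [← orthogonalProjectionOnto_eq_zero_iff, map_sub, sub_eq_zero]
  exact hv

variable [CompleteSpace E]

theorem exists_starProjection_eq_of_isClosed_sup (U V : Submodule 𝕜 E) [U.HasOrthogonalProjection]
    [V.HasOrthogonalProjection] (hUV : IsClosed ((U ⊔ V : Submodule 𝕜 E) : Set E)) {u v : E}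
    (hu : u ∈ U) (hv : v ∈ V) (huv : u - v ∈ (U ⊓ V)ᗮ) :
    ∃ x, U.starProjection x = u ∧ V.starProjection x = v := by
  -- `x = u + P_Uᗮ y` with `P_V P_Uᗮ y = v - P_V u`; the operator `R = P_V P_Uᗮ` has closed range
  -- because its adjoint has range `(U ⊔ V) ⊓ Uᗮ`.
  set R := V.starProjection ∘L Uᗮ.starProjection
  have hR : R† = Uᗮ.starProjection ∘L V.starProjection := by
    rw [adjoint_comp, (isSelfAdjoint_starProjection _).adjoint_eq,
      (isSelfAdjoint_starProjection _).adjoint_eq]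
  have hrange : R†.range = (U ⊔ V) ⊓ Uᗮ := by
    apply le_antisymm
    · rintro _ ⟨y, rfl⟩
      refine ⟨?_, by simp [hR]⟩
      rw [coe_coe, hR, comp_apply, starProjection_orthogonal_val]
      exact sub_mem (mem_sup_right (starProjection_apply_mem _ _))
        (mem_sup_left (starProjection_apply_mem _ _))
    · rintro z ⟨hz, hzU⟩
      obtain ⟨u', hu', v', hv', rfl⟩ := mem_sup.mp hz
      refine ⟨v', ?_⟩
      have hu'0 : Uᗮ.starProjection u' = 0 :=
        (starProjection_apply_eq_zero_iff _).mpr (le_orthogonal_orthogonal U hu')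
      have hz' := starProjection_eq_self_iff.mpr hzU
      rw [map_add, hu'0, zero_add] at hz'
      rwa [coe_coe, hR, comp_apply, starProjection_eq_self_iff.mpr hv']
  have hclosed : IsClosed (R†.range : Set E) := hrange ▸ hUV.inter (isClosed_orthogonal U)
  have hRrange : R.range = R†.kerᗮ := by
    simpa using (R†).range_adjoint_eq_orthogonal_ker hclosed
  obtain ⟨y, hy⟩ : v - V.starProjection u ∈ R.range := by
    rw [hRrange]
    intro z hz
    have hVz : V.starProjection z ∈ U ⊓ V := by
      refine mem_inf.mpr ⟨?_, starProjection_apply_mem _ _⟩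
      rw [← U.orthogonal_orthogonal, ← starProjection_apply_eq_zero_iff]
      simpa [hR] using hz
    rw [← starProjection_eq_self_iff.mpr hv, ← map_sub, ← inner_starProjection_left_eq_right,
      ← neg_sub, inner_neg_right, neg_eq_zero]
    exact inner_right_of_mem_orthogonal hVz huv
  refine ⟨u + Uᗮ.starProjection y, ?_, ?_⟩
  · rw [map_add, starProjection_eq_self_iff.mpr hu, (starProjection_apply_eq_zero_iff U).mpr
      (starProjection_apply_mem _ _), add_zero]
  · rw [coe_coe] at hy
    rw [map_add, ← comp_apply]
    change _ + R y = v
    rw [hy]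
    abel

end Submodule

namespace ContinuousLinearMap

section AddAdjoint

variable [CompleteSpace E] {S : E →L[𝕜] E}

theorem ker_add_adjoint (hS : IsClosed (S.range : Set E))
    (hA : ∀ a ∈ S.range, ‖(S†) a‖ ^ 2 ≤ re ⟪S a, a⟫_𝕜)
    (hB : ∀ b ∈ S†.range, ‖S b‖ ^ 2 ≤ re ⟪(S†) b, b⟫_𝕜) :
    (S + S†).ker = S.ker ⊓ S†.ker := by
  refine le_antisymm (fun x hx ↦ ?_) fun x ⟨h₁, h₂⟩ ↦ by simp_all
  have : CompleteSpace S.range := hS.completeSpace_coe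
  have : CompleteSpace (S†).range := (S.isClosed_range_adjoint hS).completeSpace_coe
  set v := S x
  have hSx : (S†) x = -v := by
    rw [eq_neg_iff_add_eq_zero, add_comm]; exact hx
  have hα : (S†) (S.range.starProjection x) = -v := by
    rw [S.adjoint_apply_starProjection_range, hSx]
  have hβ : S ((S†).range.starProjection x) = v := S.apply_starProjection_range_adjoint x
  have hvA : v ∈ S.range := ⟨x, rfl⟩
  have hvB : v ∈ S†.range := ⟨-x, by simp [hSx]⟩
  have h₁ : ‖v‖ ^ 2 ≤ -re ⟪x, v⟫_𝕜 := by
    have := hA _ (Submodule.starProjection_apply_mem _ x)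
    rwa [← adjoint_inner_right, hα, norm_neg, inner_neg_right, map_neg,
      Submodule.inner_starProjection_left_eq_right,
      Submodule.starProjection_eq_self_iff.mpr hvA] at this
  have h₂ : ‖v‖ ^ 2 ≤ re ⟪x, v⟫_𝕜 := by
    have := hB _ (Submodule.starProjection_apply_mem _ x)
    rwa [adjoint_inner_left, hβ, Submodule.inner_starProjection_left_eq_right,
      Submodule.starProjection_eq_self_iff.mpr hvB] at this
  have hv : v = 0 := by
    rw [← norm_eq_zero]; nlinarith [norm_nonneg v]
  exact ⟨hv, by simp [hSx, hv]⟩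

theorem sup_range_eq_range_add_adjoint_of_isClosed (hS : IsClosed (S.range : Set E))
    (hA : ∀ a ∈ S.range, ‖(S†) a‖ ^ 2 ≤ re ⟪S a, a⟫_𝕜)
    (hB : ∀ b ∈ S†.range, ‖S b‖ ^ 2 ≤ re ⟪(S†) b, b⟫_𝕜)
    (h : IsClosed ((S + S†).range : Set E)) :
    S.range ⊔ S†.range = (S + S†).range := by
  refine le_antisymm ?_ (LinearMap.range_add_le _ _)
  have hsa : (S + S†)† = S + S† := by rw [map_add, adjoint_adjoint, add_comm]
  rw [(S + S†).range_eq_orthogonal_ker_adjoint h, hsa, ker_add_adjoint hS hA hB,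
    ← S.orthogonal_range, ← adjoint_adjoint S, ← S†.orthogonal_range, adjoint_adjoint,
    Submodule.inf_orthogonal, sup_comm]
  exact Submodule.le_orthogonal_orthogonal _

theorem sup_range_eq_range_add_adjoint_of_isClosed_sup (hS : IsClosed (S.range : Set E))
    (hA : ∀ a ∈ S.range, ‖(S†) a‖ ^ 2 ≤ re ⟪S a, a⟫_𝕜)
    (hB : ∀ b ∈ S†.range, ‖S b‖ ^ 2 ≤ re ⟪(S†) b, b⟫_𝕜)
    (h : IsClosed ((S.range ⊔ S†.range : Submodule 𝕜 E) : Set E)) :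
    S.range ⊔ S†.range = (S + S†).range := by
  refine le_antisymm ?_ (LinearMap.range_add_le _ _)
  have hS' := S.isClosed_range_adjoint hS
  have : CompleteSpace S.range := hS.completeSpace_coe
  have : CompleteSpace (S†).range := hS'.completeSpace_coe
  have : CompleteSpace (S.range ⊓ S†.range : Submodule 𝕜 E) := (hS.inter hS').completeSpace_coe
  obtain ⟨G₁, hG₁⟩ := S†.exists_rightInverse_on_range hS'
  obtain ⟨G₂, hG₂⟩ := S.exists_rightInverse_on_range hS
  rw [adjoint_adjoint] at hG₁
  have hcoer : ∀ v ∈ S.range ⊓ S†.range, 2 * ‖v‖ ^ 2 ≤ re ⟪(G₁ + G₂) v, v⟫_𝕜 := by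
    rintro v ⟨hvA, hvB⟩
    obtain ⟨h₁, h₁'⟩ := hG₁ v hvB
    obtain ⟨h₂, h₂'⟩ := hG₂ v hvA
    have e₁ := hA _ h₁'
    have e₂ := hB _ h₂'
    rw [← adjoint_inner_right, h₁] at e₁
    rw [adjoint_inner_left, h₂] at e₂
    rw [add_apply, inner_add_left, map_add]
    linarith
  intro y hy
  obtain ⟨a, ha, b, hb, rfl⟩ := Submodule.mem_sup.mp hy
  -- `α = G₁ b + G₁ v` and `β = G₂ a - G₂ v` satisfy `S† α + S β = a + b` for every `v ∈ A ⊓ B`;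
  -- `v` is chosen so that moreover `α - β ⊥ A ⊓ B`.
  obtain ⟨v, ⟨hvA, hvB⟩, hv⟩ := (S.range ⊓ S†.range).exists_sub_mem_orthogonal_of_coercive
    (G₁ + G₂) two_pos hcoer (G₂ a - G₁ b)
  obtain ⟨x, hxA, hxB⟩ := Submodule.exists_starProjection_eq_of_isClosed_sup _ _ h
    (add_mem (hG₁ b hb).2 (hG₁ v hvB).2) (sub_mem (hG₂ a ha).2 (hG₂ v hvA).2)
    (by convert hv using 1; simp only [add_apply]; abel)
  refine ⟨x, ?_⟩
  calc (S + S†) x = S ((S†).range.starProjection x) + (S†) (S.range.starProjection x) := by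
        rw [S.apply_starProjection_range_adjoint, S.adjoint_apply_starProjection_range, add_apply]
    _ = a + b := by
        rw [hxA, hxB, map_sub, map_add, (hG₁ b hb).1, (hG₁ v hvB).1, (hG₂ a ha).1, (hG₂ v hvA).1]
        abel

theorem isClosed_range_add_adjoint_iff (hS : IsClosed (S.range : Set E))
    (hA : ∀ a ∈ S.range, ‖(S†) a‖ ^ 2 ≤ re ⟪S a, a⟫_𝕜)
    (hB : ∀ b ∈ S†.range, ‖S b‖ ^ 2 ≤ re ⟪(S†) b, b⟫_𝕜) :
    IsClosed ((S + S†).range : Set E) ↔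
      IsClosed ((S.range ⊔ S†.range : Submodule 𝕜 E) : Set E) :=
  ⟨fun h ↦ sup_range_eq_range_add_adjoint_of_isClosed hS hA hB h ▸ h,
    fun h ↦ sup_range_eq_range_add_adjoint_of_isClosed_sup hS hA hB h ▸ h⟩

end AddAdjoint

variable {P Q : E →L[𝕜] E}

theorem pow_mul_apply_of_apply_eq (hP : IsIdempotentElem P) (k : ℕ) {a : E} (ha : P a = a) :
    ((P * Q) ^ k) a = ((P * Q * P) ^ k) a := by
  induction k generalizing a with
  | zero => rfl
  | succ k ih =>
    calc ((P * Q) ^ (k + 1)) a = ((P * Q) ^ k) ((P * Q) a) := by rw [pow_succ]; rfl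
      _ = ((P * Q * P) ^ k) ((P * Q) (P a)) := by
          rw [ih (show P ((P * Q) a) = (P * Q) a from DFunLike.congr_fun hP.eq (Q a)), ha]
      _ = ((P * Q * P) ^ (k + 1)) a := by rw [pow_succ]; rfl

theorem mul_pow_succ_eq_of_isIdempotentElem (hP : IsIdempotentElem P) (k : ℕ) :
    (Q * P) ^ (k + 1) = Q * P * (P * Q * P) ^ k := by
  induction k with
  | zero => simp
  | succ k ih =>
    rw [pow_succ', ih, pow_succ']
    simp only [← mul_assoc]
    rw [mul_assoc Q P P, hP.eq]

variable [CompleteSpace E]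

theorem re_inner_star_mul_self_pow_two_mul (C : E →L[𝕜] E) (j : ℕ) (x : E) :
    re ⟪((star C * C) ^ (2 * j)) x, x⟫_𝕜 = ‖((star C * C) ^ j) x‖ ^ 2 := by
  have hsa := ((IsSelfAdjoint.star_mul_self C).pow j).adjoint_eq
  rw [two_mul, pow_add, mul_apply_eq_comp, ← adjoint_inner_right, hsa,
    inner_self_eq_norm_sq]

theorem re_inner_star_mul_self_pow_two_mul_add_one (C : E →L[𝕜] E) (j : ℕ) (x : E) :
    re ⟪((star C * C) ^ (2 * j + 1)) x, x⟫_𝕜 = ‖C (((star C * C) ^ j) x)‖ ^ 2 := by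
  have hsa := ((IsSelfAdjoint.star_mul_self C).pow j).adjoint_eq
  rw [show 2 * j + 1 = j + (j + 1) by ring, pow_add, pow_succ', mul_apply_eq_comp,
    mul_apply_eq_comp, ← adjoint_inner_right, hsa, mul_apply_eq_comp,
    star_eq_adjoint, adjoint_inner_left, inner_self_eq_norm_sq]

theorem antitone_re_inner_pow_star_mul_self {C : E →L[𝕜] E} (hC : ‖C‖ ≤ 1) (x : E) :
    Antitone fun k ↦ re ⟪((star C * C) ^ k) x, x⟫_𝕜 := by
  refine antitone_nat_of_succ_le fun k ↦ ?_
  obtain ⟨j, rfl | rfl⟩ := Nat.even_or_odd' k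
  · rw [re_inner_star_mul_self_pow_two_mul_add_one, re_inner_star_mul_self_pow_two_mul]
    gcongr
    exact C.le_of_opNorm_le hC _ |>.trans_eq (one_mul _)
  · rw [show 2 * j + 1 + 1 = 2 * (j + 1) by ring, re_inner_star_mul_self_pow_two_mul_add_one,
      re_inner_star_mul_self_pow_two_mul, pow_succ' (star C * C) j, mul_apply_eq_comp,
      mul_apply_eq_comp]
    gcongr
    have hC' : ‖star C‖ ≤ 1 := by rwa [star_eq_adjoint, adjoint.norm_map]
    exact (star C).le_of_opNorm_le hC' _ |>.trans_eq (one_mul _)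

theorem norm_sq_pow_le_re_inner_pow (hP : IsStarProjection P) (hQ : IsStarProjection Q) (n : ℕ)
    {a : E} (ha : P a = a) : ‖((Q * P) ^ n) a‖ ^ 2 ≤ re ⟪((P * Q) ^ n) a, a⟫_𝕜 := by
  have hA : star (Q * P) * (Q * P) = P * Q * P := by
    rw [star_mul, hP.isSelfAdjoint.star_eq, hQ.isSelfAdjoint.star_eq, mul_assoc, ← mul_assoc Q,
      hQ.isIdempotentElem.eq, ← mul_assoc]
  have hC : ‖Q * P‖ ≤ 1 :=
    (norm_mul_le _ _).trans (mul_le_one₀ (hQ.norm_le Q) (norm_nonneg _) (hP.norm_le P))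
  cases n with
  | zero => simp
  | succ k =>
    rw [mul_pow_succ_eq_of_isIdempotentElem hP.isIdempotentElem,
      pow_mul_apply_of_apply_eq hP.isIdempotentElem _ ha, ← hA, mul_apply_eq_comp,
      ← re_inner_star_mul_self_pow_two_mul_add_one]
    exact antitone_re_inner_pow_star_mul_self hC a (by omega : k + 1 ≤ 2 * k + 1)

theorem norm_sq_pow_le_re_inner_pow_of_mem_range (hP : IsStarProjection P)
    (hQ : IsStarProjection Q) (n : ℕ) :
    ∀ a ∈ ((P * Q) ^ n).range, ‖((Q * P) ^ n) a‖ ^ 2 ≤ re ⟪((P * Q) ^ n) a, a⟫_𝕜 := by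
  rcases n with _ | k
  · simp
  rintro _ ⟨x, rfl⟩
  refine norm_sq_pow_le_re_inner_pow hP hQ _ ?_
  rw [coe_coe, pow_succ']
  exact DFunLike.congr_fun hP.isIdempotentElem.eq _

theorem adjoint_mul_pow (hP : IsSelfAdjoint P) (hQ : IsSelfAdjoint Q) (n : ℕ) :
    ((P * Q) ^ n)† = (Q * P) ^ n := by
  rw [← star_eq_adjoint, star_pow, star_mul, hP.star_eq, hQ.star_eq]

end ContinuousLinearMap

end

variable {H : Type*} [NormedAddCommGroup H] [InnerProductSpace ℂ H] [CompleteSpace H]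

theorem stmt17_general (P Q : H →L[ℂ] H)
    (hP1 : IsIdempotentElem P) (hP2 : IsSelfAdjoint P)
    (hQ1 : IsIdempotentElem Q) (hQ2 : IsSelfAdjoint Q)
    (n : ℕ) (hS : IsClosed (LinearMap.range (((P * Q) ^ n : H →L[ℂ] H) : H →ₗ[ℂ] H) : Set H)) :
    (let S := (P * Q) ^ n
     (IsClosed (LinearMap.range ((S + adjoint S : H →L[ℂ] H) : H →ₗ[ℂ] H) : Set H) ↔
        IsClosed ((LinearMap.range (S : H →ₗ[ℂ] H) ⊔ LinearMap.range (adjoint S : H →ₗ[ℂ] H) : Submodule ℂ H) : Set H)) ∧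
       (IsClosed (LinearMap.range ((S + adjoint S : H →L[ℂ] H) : H →ₗ[ℂ] H) : Set H) →
         LinearMap.range (S : H →ₗ[ℂ] H) ⊔ LinearMap.range (adjoint S : H →ₗ[ℂ] H) = LinearMap.range ((S + adjoint S : H →L[ℂ] H) : H →ₗ[ℂ] H))) := by
  intro S
  have hP : IsStarProjection P := ⟨hP1, hP2⟩
  have hQ : IsStarProjection Q := ⟨hQ1, hQ2⟩
  have hA := norm_sq_pow_le_re_inner_pow_of_mem_range hP hQ n
  have hB := norm_sq_pow_le_re_inner_pow_of_mem_range hQ hP n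
  rw [← adjoint_mul_pow hP2 hQ2] at hA hB
  exact ⟨isClosed_range_add_adjoint_iff hS hA hB,
    sup_range_eq_range_add_adjoint_of_isClosed hS hA hB⟩

theorem stmt17 (P Q : H →L[ℂ] H)
    (hP1 : IsIdempotentElem P) (hP2 : IsSelfAdjoint P)
    (hQ1 : IsIdempotentElem Q) (hQ2 : IsSelfAdjoint Q)
    (n : ℕ) (hn : 1 ≤ n) (hS : IsClosed (LinearMap.range (((P * Q) ^ n : H →L[ℂ] H) : H →ₗ[ℂ] H) : Set H)) :
    (let S := (P * Q) ^ n
     (IsClosed (LinearMap.range ((S + adjoint S : H →L[ℂ] H) : H →ₗ[ℂ] H) : Set H) ↔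
        IsClosed ((LinearMap.range (S : H →ₗ[ℂ] H) ⊔ LinearMap.range (adjoint S : H →ₗ[ℂ] H) : Submodule ℂ H) : Set H)) ∧
       (IsClosed (LinearMap.range ((S + adjoint S : H →L[ℂ] H) : H →ₗ[ℂ] H) : Set H) →
         LinearMap.range (S : H →ₗ[ℂ] H) ⊔ LinearMap.range (adjoint S : H →ₗ[ℂ] H) = LinearMap.range ((S + adjoint S : H →L[ℂ] H) : H →ₗ[ℂ] H))) :=
  stmt17_general P Q hP1 hP2 hQ1 hQ2 n hS
end
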